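/- arXiv:1804.11099 — 6 statements merged into one kernel-verified Lean document; each statement's English description precedes it below -/
import Mathlib

section
/- For every μ ∈ (0, π/4) and every natural number k there exists a constant C > 0 such that for all real s > 0 and all nonzero complex numbers z with |arg z| ≤ μ, the (k+1)-st complex derivative at z of the entire function w ↦ e^{-w²/s} satisfies |d^{k+1}/dw^{k+1} (e^{-w²/s})(z)| ≤ C · s^{-(k+1)/2} · e^{-cos(2μ)·|z|²/(2s)}. -/
/-!
Cauchy's estimate on the circle of radius `√s` around `z` bounds the `n`-th derivative by
`n! s^{-n/2}` times the maximum of `|e^{-w²/s}| = e^{-Re(w²)/s}` on that circle. In the sector,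
`Re(z²) = |z|² cos(2 arg z) ≥ cos(2μ) |z|²`, and moving `z` by at most `√s` costs at most half of
this, up to an additive `O(s)` absorbed into the constant (AM-GM on the cross term `2 Re(z ζ)`).
-/

open Complex Metric

namespace Complex

lemma re_sq_eq_norm_sq_mul_cos_two_mul_arg (z : ℂ) :
    (z ^ 2).re = ‖z‖ ^ 2 * Real.cos (2 * z.arg) := by
  rw [pow_two, mul_re, ← norm_mul_cos_arg, ← norm_mul_sin_arg, Real.cos_two_mul']
  ring

lemma cos_two_mul_mul_norm_sq_le_re_sq {μ : ℝ} (hμ : μ ≤ Real.pi / 2) {z : ℂ}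
    (hz : |z.arg| ≤ μ) : Real.cos (2 * μ) * ‖z‖ ^ 2 ≤ (z ^ 2).re := by
  have hcos : Real.cos (2 * μ) ≤ Real.cos (2 * z.arg) := by
    rw [← Real.cos_abs (2 * z.arg)]
    refine Real.cos_le_cos_of_nonneg_of_le_pi (abs_nonneg _) (by linarith) ?_
    rw [abs_mul, abs_two]
    linarith
  rw [re_sq_eq_norm_sq_mul_cos_two_mul_arg, mul_comm]
  exact mul_le_mul_of_nonneg_left hcos (by positivity)

lemma re_sq_sub_le_re_add_sq (z ζ : ℂ) {ε : ℝ} (hε : 0 < ε) :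
    (z ^ 2).re - ε * ‖z‖ ^ 2 - (1 + ε⁻¹) * ‖ζ‖ ^ 2 ≤ ((z + ζ) ^ 2).re := by
  have hcross : -(2 * ‖z‖ * ‖ζ‖) ≤ 2 * (z * ζ).re := by
    have := neg_abs_le (z * ζ).re
    have := abs_re_le_norm (z * ζ)
    rw [norm_mul] at this
    linarith
  have hsq : -‖ζ‖ ^ 2 ≤ (ζ ^ 2).re := by
    have := neg_abs_le (ζ ^ 2).re
    have := abs_re_le_norm (ζ ^ 2)
    rw [norm_pow] at this
    linarith
  have hamgm : 2 * ‖z‖ * ‖ζ‖ ≤ ε * ‖z‖ ^ 2 + ε⁻¹ * ‖ζ‖ ^ 2 := by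
    have := sq_nonneg (ε * ‖z‖ - ‖ζ‖)
    have hε' : ε⁻¹ * ε = 1 := inv_mul_cancel₀ hε.ne'
    nlinarith [inv_pos.2 hε]
  have hexpand : ((z + ζ) ^ 2).re = (z ^ 2).re + 2 * (z * ζ).re + (ζ ^ 2).re := by
    simp only [add_sq, add_re, mul_re, mul_im, re_ofNat, im_ofNat]
    ring
  linarith

lemma norm_exp_neg_sq_div (w : ℂ) (s : ℝ) :
    ‖exp (-(w ^ 2 / (s : ℂ)))‖ = Real.exp (-((w ^ 2).re / s)) := by
  rw [norm_exp, neg_re, div_ofReal_re]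

lemma norm_exp_neg_sq_div_le_of_norm_sub_le {c s : ℝ} (hc : 0 < c) (hs : 0 < s) {z w : ℂ}
    (hz : c * ‖z‖ ^ 2 ≤ (z ^ 2).re) (hw : ‖w - z‖ ≤ Real.sqrt s) :
    ‖exp (-(w ^ 2 / (s : ℂ)))‖ ≤ Real.exp (1 + 2 / c) * Real.exp (-(c * ‖z‖ ^ 2 / (2 * s))) := by
  have hζ : ‖w - z‖ ^ 2 ≤ s := by
    calc ‖w - z‖ ^ 2 ≤ Real.sqrt s ^ 2 := by gcongr
      _ = s := Real.sq_sqrt hs.le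
  have hre : c / 2 * ‖z‖ ^ 2 - (1 + 2 / c) * s ≤ (w ^ 2).re := by
    have := re_sq_sub_le_re_add_sq z (w - z) (half_pos hc)
    rw [add_sub_cancel, inv_div] at this
    have : (1 + 2 / c) * ‖w - z‖ ^ 2 ≤ (1 + 2 / c) * s := by gcongr
    linarith
  have hdiv : c * ‖z‖ ^ 2 / (2 * s) - (1 + 2 / c) ≤ (w ^ 2).re / s := by
    rw [le_div_iff₀ hs]
    calc (c * ‖z‖ ^ 2 / (2 * s) - (1 + 2 / c)) * s = c / 2 * ‖z‖ ^ 2 - (1 + 2 / c) * s := by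
          field_simp
      _ ≤ (w ^ 2).re := hre
  rw [norm_exp_neg_sq_div, ← Real.exp_add, Real.exp_le_exp]
  linarith

end Complex

lemma Real.inv_sqrt_pow_eq_rpow {s : ℝ} (hs : 0 ≤ s) (n : ℕ) :
    (Real.sqrt s ^ n)⁻¹ = s ^ (-(n : ℝ) / 2) := by
  rw [Real.sqrt_eq_rpow, ← Real.rpow_natCast, ← Real.rpow_mul hs, ← Real.rpow_neg hs]
  ring_nf

/-- Sector version of the Gaussian derivative bound: for `0 < μ < π/4` and `k ∈ ℕ`
there is `C > 0` such that for all `s > 0` and all nonzero `z ∈ ℂ` with `|arg z| ≤ μ`,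
`|d^{k+1}/dw^{k+1}(e^{-w²/s})(z)| ≤ C s^{-(k+1)/2} e^{-cos(2μ)|z|²/(2s)}`. -/
theorem gaussian_iteratedDeriv_bound_sector (μ : ℝ) (hμ : μ ∈ Set.Ioo 0 (Real.pi / 4)) (k : ℕ) :
    ∃ C > 0, ∀ s : ℝ, 0 < s → ∀ z : ℂ, z ≠ 0 → |z.arg| ≤ μ →
      ‖iteratedDeriv (k + 1) (fun w : ℂ => Complex.exp (-(w ^ 2 / (s : ℂ)))) z‖ ≤
        C * s ^ (-((k : ℝ) + 1) / 2) *
          Real.exp (-(Real.cos (2 * μ) * ‖z‖ ^ 2 / (2 * s))) := by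
  obtain ⟨hμ0, hμπ⟩ := hμ
  set c := Real.cos (2 * μ)
  have hc : 0 < c := Real.cos_pos_of_mem_Ioo ⟨by linarith [Real.pi_pos], by linarith⟩
  refine ⟨(k + 1).factorial * Real.exp (1 + 2 / c), by positivity, fun s hs z _ harg => ?_⟩
  have hdiff : Differentiable ℂ fun w : ℂ => exp (-(w ^ 2 / (s : ℂ))) := by fun_prop
  have hsphere : ∀ w ∈ sphere z (Real.sqrt s),
      ‖exp (-(w ^ 2 / (s : ℂ)))‖ ≤ Real.exp (1 + 2 / c) * Real.exp (-(c * ‖z‖ ^ 2 / (2 * s))) :=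
    fun w hw => norm_exp_neg_sq_div_le_of_norm_sub_le hc hs
      (cos_two_mul_mul_norm_sq_le_re_sq (by linarith) harg) (mem_sphere_iff_norm.1 hw).le
  calc _ ≤ (k + 1).factorial * (Real.exp (1 + 2 / c) * Real.exp (-(c * ‖z‖ ^ 2 / (2 * s)))) /
        Real.sqrt s ^ (k + 1) :=
        norm_iteratedDeriv_le_of_forall_mem_sphere_norm_le (k + 1) (Real.sqrt_pos.2 hs)
          hdiff.diffContOnCl hsphere
    _ = _ := by
      rw [div_eq_mul_inv, Real.inv_sqrt_pow_eq_rpow hs.le, Nat.cast_add_one]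
      ring
end

section
/- Let m > n ≥ 3 be integers, let k ≥ 1 be a natural number, and let c₀ > 0. Then there exists a constant C > 0 such that for all real t > 0, d ≥ 0, and all reals X ≥ 1, Y ≥ 1: ∫_1^∞ e^{-t²/(8v)} · (t/√v)^k · [ v^{-n/2} X^{-(m-2)} Y^{-(m-2)} e^{-c₀(X²+Y²)/v} + v^{-m/2} e^{-c₀ d²/v} ] · dv/v ≤ C · t^{-n} X^{-(m-2)} Y^{-(m-2)} (t/(t+X+Y))^{n+k} + C · t^{-m} (t/(t+d))^{m+k}. -/
/-!
Each Gaussian term `v^{-a/2} e^{-cR/v}` of the heat kernel bound combines with the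
subordination weight `e^{-t²/(8v)} (t/√v)^k dv/v` into `t^k e^{-S/v} v^{-p-1} dv`, where
`S = t²/8 + cR` and `p = (a+k)/2`. Enlarging `(1, ∞)` to `(0, ∞)` and substituting `v = 1/y`
gives the Gamma integral `t^k Γ(p) S^{-p}`. Since `(t + r)² ≲ S` as soon as `r² ≤ 2R`
(take `r = X + Y`, `R = X² + Y²`, resp. `r = d`, `R = d²`), this is
`≲ t^k (t + r)^{-(a+k)} = t^{-a} (t/(t+r))^{a+k}`.
-/

open MeasureTheory Real Set

theorem lintegral_Ioi_exp_neg_div_mul_rpow {p s : ℝ} (hp : 0 < p) (hs : 0 < s) :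
    ∫⁻ v in Ioi (0 : ℝ), ENNReal.ofReal (exp (-(s / v)) * v ^ (-p - 1)) =
      ENNReal.ofReal ((1 / s) ^ p * Gamma p) := by
  set g : ℝ → ℝ := fun y => y ^ (p - 1) * exp (-(s * y))
  have hsubst : ∀ v ∈ Ioi (0 : ℝ),
      (|(-1 : ℝ)| * v ^ ((-1 : ℝ) - 1)) • g (v ^ (-1 : ℝ)) =
        exp (-(s / v)) * v ^ (-p - 1) := by
    intro v (hv : 0 < v)
    simp only [g, smul_eq_mul, abs_neg, abs_one, one_mul, rpow_neg_one, ← div_eq_mul_inv]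
    rw [inv_rpow hv.le, ← rpow_neg hv.le, ← mul_assoc, ← rpow_add hv, mul_comm]
    ring_nf
  have hg : IntegrableOn g (Ioi 0) := by
    simpa [g, rpow_one] using
      integrableOn_rpow_mul_exp_neg_mul_rpow (s := p - 1) (by linarith) one_pos hs
  have hf : IntegrableOn (fun v => exp (-(s / v)) * v ^ (-p - 1)) (Ioi 0) :=
    ((integrableOn_Ioi_comp_rpow_iff g (by norm_num)).2 hg).congr_fun hsubst measurableSet_Ioi
  have hf_nonneg : 0 ≤ᵐ[volume.restrict (Ioi 0)] fun v => exp (-(s / v)) * v ^ (-p - 1) :=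
    (ae_restrict_mem measurableSet_Ioi).mono fun v (hv : 0 < v) => by positivity
  rw [← ofReal_integral_eq_lintegral_ofReal hf hf_nonneg,
    ← integral_rpow_mul_exp_neg_mul_Ioi hp hs,
    ← integral_comp_rpow_Ioi g (by norm_num : (-1 : ℝ) ≠ 0),
    setIntegral_congr_fun measurableSet_Ioi hsubst]

noncomputable def gaussianSubordinand (a k : ℕ) (c t R v : ℝ) : ℝ :=
  exp (-(t ^ 2 / (8 * v))) * (t / √v) ^ k * (v ^ (-(a : ℝ) / 2) * exp (-(c * R / v))) / v

theorem gaussianSubordinand_eq {a k : ℕ} {c t R v : ℝ} (hv : 0 < v) :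
    gaussianSubordinand a k c t R v =
      t ^ k * (exp (-((t ^ 2 / 8 + c * R) / v)) * v ^ (-(((a : ℝ) + k) / 2) - 1)) := by
  have hsqrt : √v ^ k = v ^ ((k : ℝ) / 2) := by
    rw [sqrt_eq_rpow, ← rpow_natCast, ← rpow_mul hv.le]; ring_nf
  have hpow :
      v ^ (-(((a : ℝ) + k) / 2) - 1) = v ^ (-(a : ℝ) / 2) / (v ^ ((k : ℝ) / 2) * v) := by
    rw [show -(((a : ℝ) + k) / 2) - 1 = -(a : ℝ) / 2 - ((k : ℝ) / 2 + 1) by ring,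
      rpow_sub hv, rpow_add hv, rpow_one]
  have hexp :
      exp (-((t ^ 2 / 8 + c * R) / v)) = exp (-(t ^ 2 / (8 * v))) * exp (-(c * R / v)) := by
    rw [← exp_add]; congr 1; field_simp; ring
  rw [gaussianSubordinand, div_pow, hsqrt, hpow, hexp]
  have : 0 < v ^ ((k : ℝ) / 2) := by positivity
  field_simp

theorem lintegral_gaussianSubordinand_le_Gamma {a k : ℕ} (hak : 0 < a + k) {c t R : ℝ}
    (hc : 0 ≤ c) (ht : 0 < t) (hR : 0 ≤ R) :
    ∫⁻ v in Ioi 1, ENNReal.ofReal (gaussianSubordinand a k c t R v) ≤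
      ENNReal.ofReal (t ^ k * ((1 / (t ^ 2 / 8 + c * R)) ^ (((a : ℝ) + k) / 2) *
        Gamma (((a : ℝ) + k) / 2))) := by
  have hp : 0 < ((a : ℝ) + k) / 2 := by
    have : (0 : ℝ) < a + k := by exact_mod_cast hak
    positivity
  calc ∫⁻ v in Ioi 1, ENNReal.ofReal (gaussianSubordinand a k c t R v)
      = ∫⁻ v in Ioi 1, ENNReal.ofReal (t ^ k) * ENNReal.ofReal
          (exp (-((t ^ 2 / 8 + c * R) / v)) * v ^ (-(((a : ℝ) + k) / 2) - 1)) :=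
        setLIntegral_congr_fun measurableSet_Ioi fun v hv => by
          rw [gaussianSubordinand_eq (one_pos.trans hv), ENNReal.ofReal_mul (by positivity)]
    _ ≤ ∫⁻ v in Ioi 0, ENNReal.ofReal (t ^ k) * ENNReal.ofReal
          (exp (-((t ^ 2 / 8 + c * R) / v)) * v ^ (-(((a : ℝ) + k) / 2) - 1)) :=
        lintegral_mono_set (Ioi_subset_Ioi zero_le_one)
    _ = _ := by
        rw [lintegral_const_mul' _ _ ENNReal.ofReal_ne_top,
          lintegral_Ioi_exp_neg_div_mul_rpow hp (by positivity),
          ← ENNReal.ofReal_mul (by positivity)]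

theorem sq_add_le_mul_of_sq_le {c t r R : ℝ} (hc : 0 < c) (hrR : r ^ 2 ≤ 2 * R) :
    (t + r) ^ 2 ≤ 4 * max 8 c⁻¹ * (t ^ 2 / 8 + c * R) := by
  have h8 : 8 ≤ max 8 c⁻¹ := le_max_left _ _
  have hc' : 1 ≤ max 8 c⁻¹ * c := by
    rw [← inv_mul_cancel₀ hc.ne']; exact mul_le_mul_of_nonneg_right (le_max_right _ _) hc.le
  nlinarith [sq_nonneg (t - r), sq_nonneg t, sq_nonneg r]

theorem exists_lintegral_gaussianSubordinand_le (a k : ℕ) (hak : 0 < a + k) {c : ℝ}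
    (hc : 0 < c) :
    ∃ C > 0, ∀ t r R : ℝ, 0 < t → 0 ≤ r → r ^ 2 ≤ 2 * R →
      ∫⁻ v in Ioi 1, ENNReal.ofReal (gaussianSubordinand a k c t R v) ≤
        ENNReal.ofReal (C * t ^ (-(a : ℝ)) * (t / (t + r)) ^ (a + k)) := by
  set p : ℝ := ((a : ℝ) + k) / 2
  set K : ℝ := 4 * max 8 c⁻¹
  have hp : 0 < p := by
    have : (0 : ℝ) < a + k := by exact_mod_cast hak
    positivity
  have hK : 0 < K := by positivity
  refine ⟨Gamma p * K ^ p, by have := Gamma_pos_of_pos hp; positivity,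
    fun t r R ht hr hrR => ?_⟩
  have hR : 0 ≤ R := by nlinarith [sq_nonneg r]
  have hS : 0 < t ^ 2 / 8 + c * R := by positivity
  have htr : 0 < t + r := by positivity
  refine (lintegral_gaussianSubordinand_le_Gamma hak hc.le ht hR).trans
    (ENNReal.ofReal_le_ofReal ?_)
  have hsq : ((t + r) ^ 2) ^ p = (t + r) ^ (a + k) := by
    rw [← rpow_natCast, ← rpow_natCast, ← rpow_mul htr.le]
    congr 1; push_cast; ring
  have hinv : (1 / (t ^ 2 / 8 + c * R)) ^ p ≤ K ^ p / (t + r) ^ (a + k) := by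
    rw [← hsq, ← div_rpow hK.le (by positivity)]
    refine rpow_le_rpow (by positivity) ?_ hp.le
    rw [div_le_div_iff₀ hS (by positivity), one_mul]
    exact sq_add_le_mul_of_sq_le hc hrR
  have hscale : t ^ (-(a : ℝ)) * (t / (t + r)) ^ (a + k) = t ^ k / (t + r) ^ (a + k) := by
    rw [rpow_neg ht.le, rpow_natCast, div_pow, pow_add]
    field_simp
  calc t ^ k * ((1 / (t ^ 2 / 8 + c * R)) ^ p * Gamma p)
      ≤ t ^ k * (K ^ p / (t + r) ^ (a + k) * Gamma p) := by
        have := Gamma_pos_of_pos hp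
        gcongr
    _ = Gamma p * K ^ p * t ^ (-(a : ℝ)) * (t / (t + r)) ^ (a + k) := by
        rw [mul_assoc _ (t ^ (-(a : ℝ))), hscale]; ring

theorem poisson_case5_estimate_general (m n : ℕ)
    (k : ℕ) (hk : 1 ≤ k) (c₀ : ℝ) (hc₀ : 0 < c₀) :
    ∃ C > 0, ∀ t d X Y : ℝ, 0 < t → 0 ≤ d → 1 ≤ X → 1 ≤ Y →
      ∫⁻ v in Set.Ioi (1 : ℝ),
          ENNReal.ofReal (Real.exp (-(t ^ 2 / (8 * v))) * (t / Real.sqrt v) ^ k *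
            (v ^ (-(n : ℝ) / 2) * X ^ (-((m : ℝ) - 2)) * Y ^ (-((m : ℝ) - 2)) *
                Real.exp (-(c₀ * (X ^ 2 + Y ^ 2) / v)) +
              v ^ (-(m : ℝ) / 2) * Real.exp (-(c₀ * d ^ 2 / v))) / v) ≤
        ENNReal.ofReal (C * t ^ (-(n : ℝ)) * X ^ (-((m : ℝ) - 2)) * Y ^ (-((m : ℝ) - 2)) *
            (t / (t + X + Y)) ^ (n + k) +
          C * t ^ (-(m : ℝ)) * (t / (t + d)) ^ (m + k)) := by
  obtain ⟨C₁, hC₁, h₁⟩ := exists_lintegral_gaussianSubordinand_le n k (by omega) hc₀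
  obtain ⟨C₂, hC₂, h₂⟩ := exists_lintegral_gaussianSubordinand_le m k (by omega) hc₀
  refine ⟨max C₁ C₂, lt_max_of_lt_left hC₁, fun t d X Y ht hd hX hY => ?_⟩
  set A := X ^ (-((m : ℝ) - 2)) * Y ^ (-((m : ℝ) - 2))
  have hA : 0 ≤ A := by positivity
  set F := fun v => ENNReal.ofReal (gaussianSubordinand n k c₀ t (X ^ 2 + Y ^ 2) v)
  set G := fun v => ENNReal.ofReal (gaussianSubordinand m k c₀ t (d ^ 2) v)
  have hF : Measurable F := by unfold F gaussianSubordinand; fun_prop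
  calc _ ≤ ∫⁻ v in Ioi 1, ENNReal.ofReal A * F v + G v := lintegral_mono fun v => by
        rw [← ENNReal.ofReal_mul hA]
        convert ENNReal.ofReal_add_le using 2
        simp only [A, gaussianSubordinand]; ring
    _ = ENNReal.ofReal A * (∫⁻ v in Ioi 1, F v) + ∫⁻ v in Ioi 1, G v := by
        rw [lintegral_add_left (hF.const_mul _), lintegral_const_mul' _ _ ENNReal.ofReal_ne_top]
    _ ≤ ENNReal.ofReal A *
            ENNReal.ofReal (C₁ * t ^ (-(n : ℝ)) * (t / (t + (X + Y))) ^ (n + k)) +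
          ENNReal.ofReal (C₂ * t ^ (-(m : ℝ)) * (t / (t + d)) ^ (m + k)) := by
        gcongr
        · exact h₁ t (X + Y) _ ht (by positivity) (by nlinarith [sq_nonneg (X - Y)])
        · exact h₂ t d _ ht hd (by nlinarith [sq_nonneg d])
    _ ≤ _ := by
        rw [← ENNReal.ofReal_mul hA, ← ENNReal.ofReal_add (by positivity) (by positivity),
          ← add_assoc]
        refine ENNReal.ofReal_le_ofReal (add_le_add ?_ ?_)
        · calc A * (C₁ * t ^ (-(n : ℝ)) * (t / (t + X + Y)) ^ (n + k))
              ≤ A * (max C₁ C₂ * t ^ (-(n : ℝ)) * (t / (t + X + Y)) ^ (n + k)) := by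
                gcongr; exact le_max_left _ _
            _ = _ := by ring
        · gcongr; exact le_max_right _ _

/-- Case 5 of Theorem 2.2: for integers `m > n ≥ 3`, `k ≥ 1` and `c₀ > 0` there is `C > 0`
such that for all `t > 0`, `d ≥ 0`, `X, Y ≥ 1`,
`∫_1^∞ e^{-t²/(8v)} (t/√v)^k [v^{-n/2} X^{-(m-2)} Y^{-(m-2)} e^{-c₀(X²+Y²)/v}
 + v^{-m/2} e^{-c₀d²/v}] dv/v
 ≤ C t^{-n} X^{-(m-2)} Y^{-(m-2)} (t/(t+X+Y))^{n+k} + C t^{-m} (t/(t+d))^{m+k}`. -/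
theorem poisson_case5_estimate (m n : ℕ) (hn : 3 ≤ n) (hmn : n < m)
    (k : ℕ) (hk : 1 ≤ k) (c₀ : ℝ) (hc₀ : 0 < c₀) :
    ∃ C > 0, ∀ t d X Y : ℝ, 0 < t → 0 ≤ d → 1 ≤ X → 1 ≤ Y →
      ∫⁻ v in Set.Ioi (1 : ℝ),
          ENNReal.ofReal (Real.exp (-(t ^ 2 / (8 * v))) * (t / Real.sqrt v) ^ k *
            (v ^ (-(n : ℝ) / 2) * X ^ (-((m : ℝ) - 2)) * Y ^ (-((m : ℝ) - 2)) *
                Real.exp (-(c₀ * (X ^ 2 + Y ^ 2) / v)) +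
              v ^ (-(m : ℝ) / 2) * Real.exp (-(c₀ * d ^ 2 / v))) / v) ≤
        ENNReal.ofReal (C * t ^ (-(n : ℝ)) * X ^ (-((m : ℝ) - 2)) * Y ^ (-((m : ℝ) - 2)) *
            (t / (t + X + Y)) ^ (n + k) +
          C * t ^ (-(m : ℝ)) * (t / (t + d)) ^ (m + k)) :=
  poisson_case5_estimate_general m n k hk c₀ hc₀
end

section
/- Let m > n ≥ 3 be integers. Then the double integral ∫∫ over the region {(x,z) ∈ ℝ^m × ℝ^m : |x| ≥ 1, |z| ≥ 1} of the function |x|^{-(2m-4)} · |z|^{-(2m-4)} · (|x|+|z|)^{-2n} with respect to Lebesgue measure dx dz is finite. -/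
open MeasureTheory Set

lemma aux_finite (m k : ℕ) (hk : m < k) :
    ∫⁻ x in {x : EuclideanSpace ℝ (Fin m) | 1 ≤ ‖x‖},
      ENNReal.ofReal ((‖x‖ ^ k)⁻¹) < ⊤ := by
  have hfin : (∫⁻ x : EuclideanSpace ℝ (Fin m),
      ENNReal.ofReal ((1 + ‖x‖) ^ (-(k : ℝ)))) < ⊤ := by
    apply finite_integral_one_add_norm
    rw [finrank_euclideanSpace_fin]
    exact_mod_cast hk
  have hbound : ∀ x : EuclideanSpace ℝ (Fin m), 1 ≤ ‖x‖ →
      ENNReal.ofReal ((‖x‖ ^ k)⁻¹) ≤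
        ENNReal.ofReal (2 ^ k) * ENNReal.ofReal ((1 + ‖x‖) ^ (-(k : ℝ))) := by
    intro x hx
    rw [← ENNReal.ofReal_mul (by positivity)]
    apply ENNReal.ofReal_le_ofReal
    have h1 : (0:ℝ) < ‖x‖ := lt_of_lt_of_le one_pos hx
    have h2 : (0:ℝ) < 1 + ‖x‖ := by linarith
    rw [Real.rpow_neg h2.le, Real.rpow_natCast]
    have hkey : ((1 + ‖x‖) / 2) ^ k ≤ ‖x‖ ^ k := by
      apply pow_le_pow_left₀ (by positivity)
      linarith
    calc (‖x‖ ^ k)⁻¹ ≤ (((1 + ‖x‖) / 2) ^ k)⁻¹ := inv_anti₀ (by positivity) hkey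
      _ = 2 ^ k * ((1 + ‖x‖) ^ k)⁻¹ := by
          rw [div_pow, inv_div, div_eq_mul_inv, mul_comm]
  calc ∫⁻ x in {x : EuclideanSpace ℝ (Fin m) | 1 ≤ ‖x‖}, ENNReal.ofReal ((‖x‖ ^ k)⁻¹)
      ≤ ∫⁻ x in {x : EuclideanSpace ℝ (Fin m) | 1 ≤ ‖x‖},
          ENNReal.ofReal (2 ^ k) * ENNReal.ofReal ((1 + ‖x‖) ^ (-(k:ℝ))) := by
        apply setLIntegral_mono (by fun_prop) hbound
    _ ≤ ∫⁻ x : EuclideanSpace ℝ (Fin m),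
          ENNReal.ofReal (2 ^ k) * ENNReal.ofReal ((1 + ‖x‖) ^ (-(k:ℝ))) :=
        setLIntegral_le_lintegral _ _
    _ = ENNReal.ofReal (2 ^ k) * ∫⁻ x : EuclideanSpace ℝ (Fin m),
          ENNReal.ofReal ((1 + ‖x‖) ^ (-(k:ℝ))) := lintegral_const_mul' _ _ ENNReal.ofReal_ne_top
    _ < ⊤ := ENNReal.mul_lt_top ENNReal.ofReal_ne_top.lt_top hfin

/-- Hilbert–Schmidt estimate of Section 3.1: for integers `m > n ≥ 3`, the double integral
of `|x|^{-(2m-4)} |z|^{-(2m-4)} (|x|+|z|)^{-2n}` over `{(x,z) : |x| ≥ 1, |z| ≥ 1} ⊂ ℝ^m × ℝ^m`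
is finite. -/
theorem hilbert_schmidt_finite (m n : ℕ) (hn : 3 ≤ n) (hmn : n < m) :
    ∫⁻ p in {p : EuclideanSpace ℝ (Fin m) × EuclideanSpace ℝ (Fin m) | 1 ≤ ‖p.1‖ ∧ 1 ≤ ‖p.2‖},
        ENNReal.ofReal
          ((‖p.1‖ ^ (2 * m - 4) * ‖p.2‖ ^ (2 * m - 4) * (‖p.1‖ + ‖p.2‖) ^ (2 * n))⁻¹) < ⊤ := by
  set E := EuclideanSpace ℝ (Fin m)
  set s : Set E := {x : E | 1 ≤ ‖x‖} with hs
  set k : ℕ := 2 * m - 4 + n with hkdef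
  have hmk : m < k := by omega
  have hset : {p : E × E | 1 ≤ ‖p.1‖ ∧ 1 ≤ ‖p.2‖} = s ×ˢ s := rfl
  have hbound : ∀ p : E × E, p ∈ s ×ˢ s →
      ENNReal.ofReal
          ((‖p.1‖ ^ (2 * m - 4) * ‖p.2‖ ^ (2 * m - 4) * (‖p.1‖ + ‖p.2‖) ^ (2 * n))⁻¹) ≤
        ENNReal.ofReal ((‖p.1‖ ^ k)⁻¹) * ENNReal.ofReal ((‖p.2‖ ^ k)⁻¹) := by
    rintro ⟨x, z⟩ ⟨hx, hz⟩
    simp only [Set.mem_setOf_eq] at hx hz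
    rw [← ENNReal.ofReal_mul (by positivity)]
    apply ENNReal.ofReal_le_ofReal
    rw [← mul_inv]
    have hx0 : (0:ℝ) < ‖x‖ := lt_of_lt_of_le one_pos hx
    have hz0 : (0:ℝ) < ‖z‖ := lt_of_lt_of_le one_pos hz
    apply inv_anti₀ (mul_pos (pow_pos hx0 k) (pow_pos hz0 k))
    have key : ‖x‖ ^ n * ‖z‖ ^ n ≤ (‖x‖ + ‖z‖) ^ (2 * n) := by
      rw [two_mul, pow_add]
      gcongr <;> [skip; skip] <;> nlinarith
    calc ‖x‖ ^ k * ‖z‖ ^ k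
        = (‖x‖ ^ (2*m-4) * ‖z‖ ^ (2*m-4)) * (‖x‖ ^ n * ‖z‖ ^ n) := by
          rw [hkdef, pow_add, pow_add]; ring
      _ ≤ (‖x‖ ^ (2*m-4) * ‖z‖ ^ (2*m-4)) * (‖x‖ + ‖z‖) ^ (2*n) := by
          apply mul_le_mul_of_nonneg_left key (by positivity)
      _ = ‖x‖ ^ (2*m-4) * ‖z‖ ^ (2*m-4) * (‖x‖ + ‖z‖) ^ (2*n) := by ring
  calc ∫⁻ p in {p : E × E | 1 ≤ ‖p.1‖ ∧ 1 ≤ ‖p.2‖},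
        ENNReal.ofReal
          ((‖p.1‖ ^ (2 * m - 4) * ‖p.2‖ ^ (2 * m - 4) * (‖p.1‖ + ‖p.2‖) ^ (2 * n))⁻¹)
      ≤ ∫⁻ p in s ×ˢ s,
          ENNReal.ofReal ((‖p.1‖ ^ k)⁻¹) * ENNReal.ofReal ((‖p.2‖ ^ k)⁻¹) := by
        rw [hset]
        exact setLIntegral_mono (by fun_prop) hbound
    _ = (∫⁻ x in s, ENNReal.ofReal ((‖x‖ ^ k)⁻¹)) *
        ∫⁻ z in s, ENNReal.ofReal ((‖z‖ ^ k)⁻¹) := by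
        rw [Measure.volume_eq_prod, ← Measure.prod_restrict]
        exact lintegral_prod_mul
          (f := fun x : E => ENNReal.ofReal (‖x‖ ^ k)⁻¹)
          (g := fun x : E => ENNReal.ofReal (‖x‖ ^ k)⁻¹) (by fun_prop) (by fun_prop)
    _ < ⊤ := ENNReal.mul_lt_top (aux_finite m k hmk) (aux_finite m k hmk)
end

section
/- Let m > n ≥ 3 be integers and let E = {x ∈ ℝ^m : |x| ≥ 1}. Then there exists a constant C > 0 such that for every h ∈ L²(E), the function 𝒢h defined by 𝒢h(z) = ∫_E |h(x)| / ( |x|^{m-2} |z|^{m-2} (|x|+|z|)^n ) dx satisfies ‖𝒢h‖_{L²(E)} ≤ C ‖h‖_{L²(E)}. -/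
/-!
Since `(|x| + |z|)^n ≥ |x| |z|^(n-1)`, the kernel of `𝒢` is dominated by the rank-one kernel
`|x|^(1-m) |z|^(3-m-n)`. Both factors are square integrable on `E` because `2(m-1) > m` and
`2(m+n-3) > m`, so Cauchy–Schwarz in `x` gives
`‖𝒢h‖₂ ≤ ‖h‖₂ ‖|x|^(1-m)‖₂ ‖|z|^(3-m-n)‖₂`.
-/

open MeasureTheory Module
open scoped ENNReal

theorem eLpNorm_integral_mul_le_of_norm_le_mul {α β : Type*} [MeasurableSpace α]
    [MeasurableSpace β] {μ : Measure α} {ν : Measure β} {p q : ℝ≥0∞} [p.HolderConjugate q]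
    (r : ℝ≥0∞) {f F : α → ℝ} {G : β → ℝ} {K : α → β → ℝ}
    (hf : AEStronglyMeasurable f μ) (hF : AEStronglyMeasurable F μ)
    (hG : AEStronglyMeasurable G ν) (hK : ∀ᵐ z ∂ν, ∀ᵐ x ∂μ, ‖K x z‖ ≤ ‖F x‖ * ‖G z‖) :
    eLpNorm (fun z => ∫ x, f x * K x z ∂μ) r ν ≤
      eLpNorm f p μ * eLpNorm F q μ * eLpNorm G r ν := by
  have hpointwise : ∀ᵐ z ∂ν, ‖∫ x, f x * K x z ∂μ‖ₑ ≤ eLpNorm (f • F) 1 μ * ‖G z‖ₑ := by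
    filter_upwards [hK] with z hz
    calc ‖∫ x, f x * K x z ∂μ‖ₑ ≤ ∫⁻ x, ‖f x * K x z‖ₑ ∂μ := enorm_integral_le_lintegral_enorm _
      _ ≤ ∫⁻ x, ‖(f • F) x‖ₑ * ‖G z‖ₑ ∂μ := by
        refine lintegral_mono_ae (hz.mono fun x hx => ?_)
        change ‖f x * K x z‖ₑ ≤ ‖f x * F x‖ₑ * ‖G z‖ₑ
        rw [enorm_mul, enorm_mul, mul_assoc]
        gcongr
        rw [← enorm_mul]
        exact enorm_le_iff_norm_le.mpr (hx.trans (norm_mul _ _).ge)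
      _ = eLpNorm (f • F) 1 μ * ‖G z‖ₑ := by
        rw [lintegral_mul_const' _ _ enorm_ne_top, eLpNorm_one_eq_lintegral_enorm]
  calc eLpNorm (fun z => ∫ x, f x * K x z ∂μ) r ν
      ≤ eLpNorm (f • F) 1 μ * eLpNorm G r ν := eLpNorm_le_mul_eLpNorm_of_ae_le_mul'' r hG hpointwise
    _ ≤ eLpNorm f p μ * eLpNorm F q μ * eLpNorm G r ν := by
      gcongr
      exact eLpNorm_smul_le_mul_eLpNorm hF hf

lemma mul_pow_le_add_pow_succ {a b : ℝ} (ha : 0 ≤ a) (hb : 0 ≤ b) (n : ℕ) :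
    a * b ^ n ≤ (a + b) ^ (n + 1) := by
  rw [pow_succ']
  gcongr <;> linarith

lemma inv_pow_mul_pow_mul_add_pow_le {a b : ℝ} (ha : 0 < a) (hb : 0 < b) {m n : ℕ}
    (hm : 2 ≤ m) (hn : 1 ≤ n) :
    (a ^ (m - 2) * b ^ (m - 2) * (a + b) ^ n)⁻¹ ≤ (a ^ (m - 1))⁻¹ * (b ^ (m + n - 3))⁻¹ := by
  obtain ⟨k, rfl⟩ : ∃ k, m = k + 2 := ⟨m - 2, by omega⟩
  obtain ⟨j, rfl⟩ : ∃ j, n = j + 1 := ⟨n - 1, by omega⟩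
  rw [show k + 2 - 2 = k by omega, show k + 2 - 1 = k + 1 by omega,
    show k + 2 + (j + 1) - 3 = k + j by omega, ← mul_inv]
  refine inv_anti₀ (by positivity) ?_
  calc a ^ (k + 1) * b ^ (k + j) = a ^ k * b ^ k * (a * b ^ j) := by ring
    _ ≤ a ^ k * b ^ k * (a + b) ^ (j + 1) := by
      gcongr
      exact mul_pow_le_add_pow_succ ha.le hb.le j

lemma ENNReal.exists_pos_le_ofReal {a : ℝ≥0∞} (ha : a ≠ ∞) : ∃ C > 0, a ≤ ENNReal.ofReal C :=
  ⟨a.toReal + 1, by positivity,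
    (ENNReal.le_ofReal_iff_toReal_le ha (by positivity)).mpr (le_add_of_nonneg_right zero_le_one)⟩

section

variable {E : Type*} [NormedAddCommGroup E] [NormedSpace ℝ E] [FiniteDimensional ℝ E]
  [MeasurableSpace E] [BorelSpace E] {μ : Measure E} [μ.IsAddHaarMeasure]

theorem integrableOn_inv_norm_pow {k : ℕ} (hk : finrank ℝ E < k) :
    IntegrableOn (fun x : E => (‖x‖ ^ k)⁻¹) {x | 1 ≤ ‖x‖} μ := by
  have hmajorant : Integrable (fun x : E => 2 ^ k * (1 + ‖x‖) ^ (-(k : ℝ))) μ :=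
    (integrable_one_add_norm (by exact_mod_cast hk)).const_mul _
  refine hmajorant.integrableOn.mono' (by fun_prop) ?_
  filter_upwards [ae_restrict_mem (measurableSet_le measurable_const measurable_norm)]
    with x (hx : 1 ≤ ‖x‖)
  rw [Real.norm_of_nonneg (by positivity), Real.rpow_neg (by positivity), Real.rpow_natCast,
    ← inv_pow, ← div_eq_mul_inv, ← div_pow]
  gcongr
  rw [inv_eq_one_div, div_le_div_iff₀ (by positivity) (by positivity)]
  linarith

theorem memLp_two_inv_norm_pow {k : ℕ} (hk : finrank ℝ E < 2 * k) :
    MemLp (fun x : E => (‖x‖ ^ k)⁻¹) 2 (μ.restrict {x | 1 ≤ ‖x‖}) := by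
  rw [memLp_two_iff_integrable_sq (by fun_prop)]
  have := integrableOn_inv_norm_pow (μ := μ) hk
  simp only [← inv_pow, ← pow_mul'] at this ⊢
  exact this

end

/-- L² boundedness of the operator 𝒢 of Section 3.1: for integers `m > n ≥ 3` and
`E = {x ∈ ℝ^m : |x| ≥ 1}`, there is `C > 0` such that for every `h ∈ L²(E)`,
`‖𝒢h‖_{L²(E)} ≤ C ‖h‖_{L²(E)}` where
`𝒢h(z) = ∫_E |h(x)| / (|x|^{m-2} |z|^{m-2} (|x|+|z|)^n) dx`. -/
theorem opG_L2_bounded (m n : ℕ) (hn : 3 ≤ n) (hmn : n < m) :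
    ∃ C > 0, ∀ h : EuclideanSpace ℝ (Fin m) → ℝ,
      MemLp h 2 (volume.restrict {x : EuclideanSpace ℝ (Fin m) | 1 ≤ ‖x‖}) →
      eLpNorm
          (fun z : EuclideanSpace ℝ (Fin m) =>
            ∫ x in {x : EuclideanSpace ℝ (Fin m) | 1 ≤ ‖x‖},
              |h x| / (‖x‖ ^ (m - 2) * ‖z‖ ^ (m - 2) * (‖x‖ + ‖z‖) ^ n)) 2
          (volume.restrict {x : EuclideanSpace ℝ (Fin m) | 1 ≤ ‖x‖}) ≤
        ENNReal.ofReal C *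
          eLpNorm h 2 (volume.restrict {x : EuclideanSpace ℝ (Fin m) | 1 ≤ ‖x‖}) := by
  have hdim : finrank ℝ (EuclideanSpace ℝ (Fin m)) = m := finrank_euclideanSpace_fin
  have hF := memLp_two_inv_norm_pow (μ := volume) (k := m - 1) (by rw [hdim]; omega)
  have hG := memLp_two_inv_norm_pow (μ := volume) (k := m + n - 3) (by rw [hdim]; omega)
  obtain ⟨C, hC, hFG⟩ :=
    ENNReal.exists_pos_le_ofReal (ENNReal.mul_ne_top hF.eLpNorm_ne_top hG.eLpNorm_ne_top)
  refine ⟨C, hC, fun h hh => ?_⟩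
  have hE : MeasurableSet {x : EuclideanSpace ℝ (Fin m) | 1 ≤ ‖x‖} :=
    measurableSet_le measurable_const measurable_norm
  simp only [div_eq_mul_inv, ← Real.norm_eq_abs]
  calc _ ≤ eLpNorm (fun x => ‖h x‖) 2 _ * eLpNorm _ 2 _ * eLpNorm _ 2 _ := by
        refine eLpNorm_integral_mul_le_of_norm_le_mul 2 hh.1.norm hF.1 hG.1 ?_
        filter_upwards [ae_restrict_mem hE] with z (hz : 1 ≤ ‖z‖)
        filter_upwards [ae_restrict_mem hE] with x (hx : 1 ≤ ‖x‖)
        rw [Real.norm_of_nonneg (by positivity), Real.norm_of_nonneg (by positivity),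
          Real.norm_of_nonneg (by positivity)]
        exact inv_pow_mul_pow_mul_add_pow_le (by positivity) (by positivity) (by omega) (by omega)
    _ ≤ _ := by
      rw [eLpNorm_norm, mul_assoc, mul_comm]
      gcongr
end

section
/- Let m > n ≥ 3 be integers, let E_n = {x ∈ ℝ^n : |x| ≥ 1} and E_m = {z ∈ ℝ^m : |z| ≥ 1}. Then there exists a constant C > 0 such that for every real t > 0 and every h ∈ L²(E_n), the function 𝒯h defined by 𝒯h(z) = |z|^{-(m-2)} ∫_{E_n} ( t / (t + |x| + |z|)^{n+1} ) |h(x)| dx satisfies ‖𝒯h‖_{L²(E_m)} ≤ C ‖h‖_{L²(E_n)}, with C independent of t. -/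
/-!
For `‖z‖ ≥ 1` the kernel of `𝒯` is dominated by a product `w(z) v(x)`: first
`t / (t + s)^(n+1) ≤ s^(-n)` removes `t`, then splitting `s^(-n) = s^(-(n+1)/2) s^(-(n-1)/2)`
with `s = |x| + |z|` gives `v(x) = (1 + |x|)^(-(n+1)/2)` and `w(z) = 2^r (1 + |z|)^(-r)`, where
`r = (m-2) + (n-1)/2` and `|z|^(-r) ≤ w(z)`. Both are square integrable, `w` because
`m + n > 5`. Cauchy–Schwarz in `x` then gives `‖𝒯h‖₂ ≤ ‖w‖₂ ‖v‖₂ ‖h‖₂`.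
-/

open MeasureTheory Module
open scoped ENNReal

theorem div_add_pow_succ_le_inv_pow {t s : ℝ} (ht : 0 ≤ t) (hs : 0 < s) (n : ℕ) :
    t / (t + s) ^ (n + 1) ≤ (s ^ n)⁻¹ := by
  rw [div_le_iff₀ (by positivity), inv_mul_eq_div, le_div_iff₀ (by positivity)]
  calc t * s ^ n ≤ (t + s) * (t + s) ^ n := by gcongr <;> linarith
    _ = (t + s) ^ (n + 1) := by ring

theorem add_rpow_neg_add_le_mul_rpow_neg {a R p q : ℝ} (ha : 0 ≤ a) (hR : 1 ≤ R) (hp : 0 ≤ p)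
    (hq : 0 ≤ q) : (a + R) ^ (-(p + q)) ≤ (1 + a) ^ (-p) * R ^ (-q) := by
  rw [neg_add, Real.rpow_add (by linarith)]
  exact mul_le_mul (Real.rpow_le_rpow_of_nonpos (by positivity) (by linarith) (by linarith))
    (Real.rpow_le_rpow_of_nonpos (by linarith) (by linarith) (by linarith)) (by positivity)
    (by positivity)

theorem rpow_neg_le_two_rpow_mul_one_add_rpow_neg {R r : ℝ} (hR : 1 ≤ R) (hr : 0 ≤ r) :
    R ^ (-r) ≤ 2 ^ r * (1 + R) ^ (-r) := by
  have hR0 : 0 < R := by linarith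
  rw [Real.rpow_neg hR0.le, Real.rpow_neg (by positivity), ← Real.inv_rpow hR0.le,
    ← Real.inv_rpow (by positivity), ← Real.mul_rpow (by positivity) (by positivity)]
  refine Real.rpow_le_rpow (by positivity) ?_ hr
  rw [← div_eq_mul_inv, inv_le_iff_one_le_mul₀ hR0, div_mul_eq_mul_div, le_div_iff₀ (by positivity)]
  linarith

theorem memLp_two_one_add_norm_rpow_neg {E : Type*} [NormedAddCommGroup E] [NormedSpace ℝ E]
    [FiniteDimensional ℝ E] [MeasurableSpace E] [BorelSpace E] (μ : Measure E)
    [μ.IsAddHaarMeasure] {s : ℝ} (hs : (finrank ℝ E : ℝ) < 2 * s) :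
    MemLp (fun x : E => (1 + ‖x‖) ^ (-s)) 2 μ := by
  have hmeas : AEStronglyMeasurable (fun x : E => (1 + ‖x‖) ^ (-s)) μ :=
    (Continuous.rpow_const (by fun_prop) fun x => Or.inl (by positivity)).aestronglyMeasurable
  rw [memLp_two_iff_integrable_sq hmeas]
  have hsq : (fun x : E => ((1 + ‖x‖) ^ (-s)) ^ 2) = fun x => (1 + ‖x‖) ^ (-(2 * s)) := by
    ext x
    rw [← Real.rpow_natCast, ← Real.rpow_mul (by positivity)]
    ring_nf
  rw [hsq]
  exact integrable_one_add_norm hs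

theorem eLpNorm_integral_le_of_norm_le_mul {α β G : Type*} [MeasurableSpace α]
    [MeasurableSpace β] [NormedAddCommGroup G] [NormedSpace ℝ G] {μ : Measure α}
    {ν : Measure β} {p q r : ℝ≥0∞} [p.HolderConjugate q] {F : β → α → G} {w : β → ℝ}
    {v g : α → ℝ} (hw : AEStronglyMeasurable w ν) (hv : AEStronglyMeasurable v μ)
    (hg : AEStronglyMeasurable g μ) (hF : ∀ᵐ z ∂ν, ∀ᵐ x ∂μ, ‖F z x‖ ≤ ‖w z‖ * ‖v x‖ * ‖g x‖) :
    eLpNorm (fun z => ∫ x, F z x ∂μ) r ν ≤ eLpNorm w r ν * eLpNorm v p μ * eLpNorm g q μ := by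
  have holder : eLpNorm (fun x => v x * g x) 1 μ ≤ eLpNorm v p μ * eLpNorm g q μ := by
    simpa using eLpNorm_le_eLpNorm_mul_eLpNorm_of_nnnorm hv hg (· * ·) 1
      (ae_of_all _ fun x => by simp [nnnorm_mul])
  have pointwise : ∀ᵐ z ∂ν, ‖∫ x, F z x ∂μ‖ₑ ≤ (eLpNorm v p μ * eLpNorm g q μ) * ‖w z‖ₑ := by
    filter_upwards [hF] with z hz
    calc ‖∫ x, F z x ∂μ‖ₑ ≤ ∫⁻ x, ‖F z x‖ₑ ∂μ := enorm_integral_le_lintegral_enorm _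
      _ ≤ ∫⁻ x, ‖w z‖ₑ * ‖v x * g x‖ₑ ∂μ := by
        refine lintegral_mono_ae (hz.mono fun x hx => ?_)
        rw [← enorm_mul, enorm_le_iff_norm_le, norm_mul, norm_mul, ← mul_assoc]
        exact hx
      _ = ‖w z‖ₑ * eLpNorm (fun x => v x * g x) 1 μ := by
        rw [lintegral_const_mul' _ _ enorm_ne_top, eLpNorm_one_eq_lintegral_enorm]
      _ ≤ (eLpNorm v p μ * eLpNorm g q μ) * ‖w z‖ₑ := by
        rw [mul_comm]
        gcongr
  calc eLpNorm (fun z => ∫ x, F z x ∂μ) r ν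
      ≤ (eLpNorm v p μ * eLpNorm g q μ) * eLpNorm w r ν :=
        eLpNorm_le_mul_eLpNorm_of_ae_le_mul'' r hw pointwise
    _ = eLpNorm w r ν * eLpNorm v p μ * eLpNorm g q μ := by ring

theorem inv_pow_mul_div_add_add_pow_le {t a R : ℝ} (k : ℕ) {n : ℕ} (ht : 0 ≤ t) (ha : 0 ≤ a)
    (hR : 1 ≤ R) (hn : 1 ≤ n) :
    (R ^ k)⁻¹ * (t / (t + a + R) ^ (n + 1)) ≤
      2 ^ ((k : ℝ) + ((n : ℝ) - 1) / 2) * (1 + R) ^ (-((k : ℝ) + ((n : ℝ) - 1) / 2)) *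
        (1 + a) ^ (-(((n : ℝ) + 1) / 2)) := by
  have hR0 : 0 < R := by linarith
  have hn' : (1 : ℝ) ≤ n := by exact_mod_cast hn
  have split : ((a + R) ^ n)⁻¹ ≤ (1 + a) ^ (-(((n : ℝ) + 1) / 2)) * R ^ (-(((n : ℝ) - 1) / 2)) := by
    have := add_rpow_neg_add_le_mul_rpow_neg ha hR (p := ((n : ℝ) + 1) / 2)
      (q := ((n : ℝ) - 1) / 2) (by positivity) (by linarith)
    rwa [show ((n : ℝ) + 1) / 2 + ((n : ℝ) - 1) / 2 = n by ring, Real.rpow_neg (by positivity),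
      Real.rpow_natCast] at this
  calc (R ^ k)⁻¹ * (t / (t + a + R) ^ (n + 1))
      ≤ (R ^ k)⁻¹ * ((a + R) ^ n)⁻¹ := by
        rw [add_assoc]
        gcongr
        exact div_add_pow_succ_le_inv_pow ht (by positivity) n
    _ ≤ R ^ (-(k : ℝ)) * ((1 + a) ^ (-(((n : ℝ) + 1) / 2)) * R ^ (-(((n : ℝ) - 1) / 2))) := by
        rw [Real.rpow_neg hR0.le, Real.rpow_natCast]
        gcongr
    _ = R ^ (-((k : ℝ) + ((n : ℝ) - 1) / 2)) * (1 + a) ^ (-(((n : ℝ) + 1) / 2)) := by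
        rw [neg_add, Real.rpow_add hR0]
        ring
    _ ≤ _ := by
        gcongr
        exact rpow_neg_le_two_rpow_mul_one_add_rpow_neg hR (by positivity)

/-- L² boundedness of the operator 𝒯 of Section 3.1, uniformly in `t`: for integers
`m > n ≥ 3`, `E_n = {x ∈ ℝ^n : |x| ≥ 1}` and `E_m = {z ∈ ℝ^m : |z| ≥ 1}`, there is `C > 0`
such that for every `t > 0` and every `h ∈ L²(E_n)`,
`‖𝒯h‖_{L²(E_m)} ≤ C ‖h‖_{L²(E_n)}` where
`𝒯h(z) = |z|^{-(m-2)} ∫_{E_n} (t/(t+|x|+|z|)^{n+1}) |h(x)| dx`. -/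
theorem opT_L2_bounded (m n : ℕ) (hn : 3 ≤ n) (hmn : n < m) :
    ∃ C > 0, ∀ t : ℝ, 0 < t → ∀ h : EuclideanSpace ℝ (Fin n) → ℝ,
      MemLp h 2 (volume.restrict {x : EuclideanSpace ℝ (Fin n) | 1 ≤ ‖x‖}) →
      eLpNorm
          (fun z : EuclideanSpace ℝ (Fin m) =>
            (‖z‖ ^ (m - 2))⁻¹ *
              ∫ x in {x : EuclideanSpace ℝ (Fin n) | 1 ≤ ‖x‖},
                (t / (t + ‖x‖ + ‖z‖) ^ (n + 1)) * |h x|) 2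
          (volume.restrict {z : EuclideanSpace ℝ (Fin m) | 1 ≤ ‖z‖}) ≤
        ENNReal.ofReal C *
          eLpNorm h 2 (volume.restrict {x : EuclideanSpace ℝ (Fin n) | 1 ≤ ‖x‖}) := by
  set En := {x : EuclideanSpace ℝ (Fin n) | 1 ≤ ‖x‖}
  set Em := {z : EuclideanSpace ℝ (Fin m) | 1 ≤ ‖z‖}
  set μ : Measure (EuclideanSpace ℝ (Fin n)) := volume.restrict En
  set ν : Measure (EuclideanSpace ℝ (Fin m)) := volume.restrict Em
  set p : ℝ := ((n : ℝ) + 1) / 2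
  set r : ℝ := ((m - 2 : ℕ) : ℝ) + ((n : ℝ) - 1) / 2
  set v : EuclideanSpace ℝ (Fin n) → ℝ := fun x => (1 + ‖x‖) ^ (-p)
  set w : EuclideanSpace ℝ (Fin m) → ℝ := fun z => 2 ^ r * (1 + ‖z‖) ^ (-r)
  have hv : MemLp v 2 μ :=
    (memLp_two_one_add_norm_rpow_neg volume (by simp [p]; linarith)).restrict En
  have hw : MemLp w 2 ν := by
    refine ((memLp_two_one_add_norm_rpow_neg volume ?_).const_mul _).restrict Em
    have : (n : ℝ) + 1 ≤ m := by exact_mod_cast hmn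
    have : (3 : ℝ) ≤ n := by exact_mod_cast hn
    simp only [finrank_euclideanSpace_fin, r, Nat.cast_sub (by omega : 2 ≤ m)]
    push_cast
    linarith
  refine ⟨max (eLpNorm w 2 ν * eLpNorm v 2 μ).toReal 1, by positivity, fun t ht h hh => ?_⟩
  have dominated : ∀ᵐ z ∂ν, ∀ᵐ x ∂μ,
      ‖(‖z‖ ^ (m - 2))⁻¹ * (t / (t + ‖x‖ + ‖z‖) ^ (n + 1) * |h x|)‖ ≤ ‖w z‖ * ‖v x‖ * ‖h x‖ := by
    refine ae_restrict_of_forall_mem (measurableSet_le measurable_const measurable_norm)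
      fun z hz => ae_of_all _ fun x => ?_
    rw [Real.norm_of_nonneg (by positivity), Real.norm_of_nonneg (by positivity),
      Real.norm_of_nonneg (by positivity), Real.norm_eq_abs, ← mul_assoc]
    exact mul_le_mul_of_nonneg_right
      (inv_pow_mul_div_add_add_pow_le (m - 2) ht.le (norm_nonneg x) hz (by omega)) (abs_nonneg _)
  calc _ = eLpNorm (fun z => ∫ x, (‖z‖ ^ (m - 2))⁻¹ * (t / (t + ‖x‖ + ‖z‖) ^ (n + 1) * |h x|) ∂μ)
        2 ν := by simp_rw [integral_const_mul]
    _ ≤ eLpNorm w 2 ν * eLpNorm v 2 μ * eLpNorm h 2 μ :=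
        eLpNorm_integral_le_of_norm_le_mul hw.1 hv.1 hh.1 dominated
    _ ≤ _ := by
        gcongr
        rw [ENNReal.le_ofReal_iff_toReal_le (by finiteness [hw.eLpNorm_ne_top, hv.eLpNorm_ne_top])
          (by positivity)]
        exact le_max_left _ _
end

section
/- Let m ≥ 1 be an integer. There exists a constant C > 0 depending only on m such that for every countable family {Q_i}_{i ∈ I} of pairwise disjoint axis-parallel cubes in ℝ^m, with t_i denoting the side length of Q_i, the function F(x) = ∑_{i ∈ I} ∫_{Q_i} t_i / (t_i + |x − z|)^{m+1} dz satisfies ‖F‖_{L²(ℝ^m)} ≤ C (∑_{i ∈ I} |Q_i|)^{1/2}, where |Q_i| denotes the Lebesgue measure of Q_i. -/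
/-!
Write `P_t y = t / (t + ‖y‖) ^ (d + 1)` in dimension `d`; the function to be estimated is
dominated by `∑ᵢ Sᵢ` with `Sᵢ = P_{tᵢ} * 1_{Qᵢ}`, and `‖∑ᵢ Sᵢ‖₂² = ∑_{i,j} ∫ Sᵢ Sⱼ`.
Every `x` is at distance at least `‖z - w‖ / 2` from one of `z` and `w`, whence
`P_t (x - z) P_s (x - w) ≲ P_t (z - w) P_s (x - w) + P_s (w - z) P_t (x - z)`; as `∫ P_t` does not
depend on `t` (by scaling), integrating in `x` gives
`∫ Sᵢ Sⱼ ≲ ∫_{Qᵢ} P_{tᵢ} * 1_{Qⱼ} + ∫_{Qⱼ} P_{tⱼ} * 1_{Qᵢ}`. By symmetry it remains to sum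
`∑ⱼ ∫_{Qᵢ} P_{tᵢ} * 1_{Qⱼ} ≤ |Qᵢ| ∫ P_1`, which is where the disjointness of the cubes enters.
-/

open Function MeasureTheory Module
open scoped ENNReal

noncomputable def poissonProfile (d : ℕ) (t r : ℝ) : ℝ := t / (t + r) ^ (d + 1)

section Profile

variable {d : ℕ} {t : ℝ}

@[fun_prop]
lemma measurable_poissonProfile : Measurable (poissonProfile d t) := by
  unfold poissonProfile; fun_prop

lemma poissonProfile_nonneg (ht : 0 < t) {r : ℝ} (hr : 0 ≤ r) : 0 ≤ poissonProfile d t r := by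
  unfold poissonProfile; positivity

lemma poissonProfile_le_of_half_le (ht : 0 < t) {r a : ℝ} (hr : 0 ≤ r) (ha : r / 2 ≤ a) :
    poissonProfile d t a ≤ 2 ^ (d + 1) * poissonProfile d t r := by
  have ha₀ : 0 ≤ a := by linarith
  have hpow : (t + r) ^ (d + 1) ≤ 2 ^ (d + 1) * (t + a) ^ (d + 1) := by
    rw [← mul_pow]; gcongr; linarith
  unfold poissonProfile
  calc t / (t + a) ^ (d + 1) = 2 ^ (d + 1) * t / (2 ^ (d + 1) * (t + a) ^ (d + 1)) := by
        field_simp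
    _ ≤ 2 ^ (d + 1) * t / (t + r) ^ (d + 1) :=
        div_le_div_of_nonneg_left (by positivity) (by positivity) hpow
    _ = 2 ^ (d + 1) * (t / (t + r) ^ (d + 1)) := mul_div_assoc _ _ _

lemma poissonProfile_mul_self (ht : 0 < t) {r : ℝ} (hr : 0 ≤ r) :
    poissonProfile d t (t * r) = (t ^ d)⁻¹ * poissonProfile d 1 r := by
  unfold poissonProfile
  rw [show t + t * r = t * (1 + r) by ring, mul_pow, pow_succ t d]
  have : 0 < 1 + r := by linarith
  field_simp

lemma poissonProfile_mul_le {E : Type*} [SeminormedAddCommGroup E] {s : ℝ} (ht : 0 < t)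
    (hs : 0 < s) (x z w : E) :
    poissonProfile d t ‖x - z‖ * poissonProfile d s ‖x - w‖ ≤
      2 ^ (d + 1) * (poissonProfile d t ‖z - w‖ * poissonProfile d s ‖x - w‖ +
        poissonProfile d s ‖w - z‖ * poissonProfile d t ‖x - z‖) := by
  have hPz := poissonProfile_nonneg (d := d) ht (norm_nonneg (x - z))
  have hPw := poissonProfile_nonneg (d := d) hs (norm_nonneg (x - w))
  have hzw := norm_nonneg (z - w)
  have hwz := norm_nonneg (w - z)
  have hP₁ := poissonProfile_nonneg (d := d) ht hzw
  have hP₂ := poissonProfile_nonneg (d := d) hs hwz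
  rcases le_total (‖z - w‖ / 2) ‖x - z‖ with hxz | hxz
  · calc _ ≤ 2 ^ (d + 1) * poissonProfile d t ‖z - w‖ * poissonProfile d s ‖x - w‖ :=
          mul_le_mul_of_nonneg_right (poissonProfile_le_of_half_le ht hzw hxz) hPw
      _ ≤ _ := by
          rw [mul_assoc]
          exact mul_le_mul_of_nonneg_left (le_add_of_nonneg_right (mul_nonneg hP₂ hPz))
            (by positivity)
  · have hxw : ‖w - z‖ / 2 ≤ ‖x - w‖ := by
      have := norm_sub_le_norm_sub_add_norm_sub z x w
      rw [norm_sub_rev z x] at this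
      rw [norm_sub_rev w z]
      linarith
    calc _ ≤ 2 ^ (d + 1) * poissonProfile d s ‖w - z‖ * poissonProfile d t ‖x - z‖ := by
          rw [mul_comm]
          exact mul_le_mul_of_nonneg_right (poissonProfile_le_of_half_le hs hwz hxw) hPz
      _ ≤ _ := by
          rw [mul_assoc]
          exact mul_le_mul_of_nonneg_left (le_add_of_nonneg_left (mul_nonneg hP₁ hPw))
            (by positivity)

end Profile

lemma lintegral_mul_lintegral_eq_lintegral_lintegral_lintegral {α β γ : Type*}
    [MeasurableSpace α] [MeasurableSpace β] [MeasurableSpace γ] {μ : Measure α} {ν : Measure β}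
    {ρ : Measure γ} [SFinite μ] [SFinite ν] [SFinite ρ] {f : α → β → ℝ≥0∞}
    {g : α → γ → ℝ≥0∞} (hf : Measurable (uncurry f))
    (hg : Measurable (uncurry g)) :
    ∫⁻ x, (∫⁻ y, f x y ∂ν) * (∫⁻ z, g x z ∂ρ) ∂μ = ∫⁻ y, ∫⁻ z, ∫⁻ x, f x y * g x z ∂μ ∂ρ ∂ν := by
  have hprod (x : α) :
      (∫⁻ y, f x y ∂ν) * (∫⁻ z, g x z ∂ρ) = ∫⁻ y, ∫⁻ z, f x y * g x z ∂ρ ∂ν := by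
    rw [← lintegral_mul_const _ hf.of_uncurry_left]
    exact lintegral_congr fun y => (lintegral_const_mul _ hg.of_uncurry_left).symm
  simp_rw [hprod]
  rw [lintegral_lintegral_swap ?_]
  · refine lintegral_congr fun y => lintegral_lintegral_swap ?_
    exact ((hf.comp (measurable_fst.prodMk measurable_const)).mul hg).aemeasurable
  · refine (Measurable.lintegral_prod_right' (f := fun q : (α × β) × γ =>
      f q.1.1 q.1.2 * g q.1.1 q.2) ?_).aemeasurable
    exact (hf.comp measurable_fst).mul (hg.comp (measurable_fst.fst.prodMk measurable_snd))

lemma lintegral_tsum_sq {α ι : Type*} [MeasurableSpace α] [Countable ι] {μ : Measure α}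
    {f : ι → α → ℝ≥0∞} (hf : ∀ i, Measurable (f i)) :
    ∫⁻ x, (∑' i, f i x) ^ 2 ∂μ = ∑' i, ∑' j, ∫⁻ x, f i x * f j x ∂μ := by
  simp_rw [sq, ← ENNReal.tsum_mul_right, ← ENNReal.tsum_mul_left]
  rw [lintegral_tsum fun i => (Measurable.tsum fun j => (hf i).fun_mul (hf j)).aemeasurable]
  exact tsum_congr fun i => lintegral_tsum fun j => ((hf i).fun_mul (hf j)).aemeasurable

section Smoothing

variable {E : Type*} [NormedAddCommGroup E] [NormedSpace ℝ E] [MeasurableSpace E]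
  (μ : Measure E) {t : ℝ}

noncomputable def poissonSmoothing (t : ℝ) (Q : Set E) (x : E) : ℝ≥0∞ :=
  ∫⁻ z in Q, ENNReal.ofReal (poissonProfile (finrank ℝ E) t ‖x - z‖) ∂μ

lemma enorm_setIntegral_poissonProfile_le (ht : 0 < t) (Q : Set E) (x : E) :
    ‖∫ z in Q, poissonProfile (finrank ℝ E) t ‖x - z‖ ∂μ‖ₑ ≤ poissonSmoothing μ t Q x :=
  (enorm_integral_le_lintegral_enorm _).trans_eq <| lintegral_congr fun _ =>
    Real.enorm_of_nonneg (poissonProfile_nonneg ht (norm_nonneg _))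

end Smoothing

section Haar

variable {E : Type*} [NormedAddCommGroup E] [NormedSpace ℝ E] [FiniteDimensional ℝ E]
  [MeasurableSpace E] [BorelSpace E] (μ : Measure E) [μ.IsAddHaarMeasure] {t s : ℝ}

noncomputable def poissonConst : ℝ≥0∞ :=
  ∫⁻ y, ENNReal.ofReal (poissonProfile (finrank ℝ E) 1 ‖y‖) ∂μ

lemma poissonConst_lt_top : poissonConst μ < ∞ := by
  refine lt_of_eq_of_lt (lintegral_congr fun y => ?_)
    (finite_integral_one_add_norm (μ := μ) (r := finrank ℝ E + 1) (by linarith))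
  rw [poissonProfile, one_div, ← Real.rpow_natCast, ← Real.rpow_neg (by positivity)]
  push_cast
  rfl

lemma lintegral_poissonProfile (ht : 0 < t) (w : E) :
    ∫⁻ x, ENNReal.ofReal (poissonProfile (finrank ℝ E) t ‖x - w‖) ∂μ = poissonConst μ := by
  set d := finrank ℝ E
  set f : E → ℝ≥0∞ := fun x => ENNReal.ofReal (poissonProfile d t ‖x‖)
  have hscale : ∫⁻ x, f (t • x) ∂μ = ENNReal.ofReal (t ^ d)⁻¹ * ∫⁻ x, f x ∂μ := by
    rw [← lintegral_map (by fun_prop) (by fun_prop), Measure.map_addHaar_smul μ ht.ne',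
      lintegral_smul_measure, abs_of_pos (by positivity), smul_eq_mul]
  have hf_smul (x : E) :
      f (t • x) = ENNReal.ofReal (t ^ d)⁻¹ * ENNReal.ofReal (poissonProfile d 1 ‖x‖) := by
    simp only [f, norm_smul, Real.norm_of_nonneg ht.le,
      poissonProfile_mul_self ht (norm_nonneg x)]
    rw [ENNReal.ofReal_mul (by positivity)]
  simp_rw [hf_smul, lintegral_const_mul' _ _ ENNReal.ofReal_ne_top] at hscale
  rw [lintegral_sub_right_eq_self f w]
  exact ((ENNReal.mul_right_inj (ENNReal.ofReal_pos.2 (by positivity)).ne'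
    ENNReal.ofReal_ne_top).1 hscale).symm

lemma lintegral_poissonProfile_mul_le (ht : 0 < t) (hs : 0 < s) (z w : E) :
    ∫⁻ x, ENNReal.ofReal (poissonProfile (finrank ℝ E) t ‖x - z‖) *
        ENNReal.ofReal (poissonProfile (finrank ℝ E) s ‖x - w‖) ∂μ ≤
      2 ^ (finrank ℝ E + 1) * poissonConst μ *
        (ENNReal.ofReal (poissonProfile (finrank ℝ E) t ‖z - w‖) +
          ENNReal.ofReal (poissonProfile (finrank ℝ E) s ‖w - z‖)) := by
  set d := finrank ℝ E
  set P : ℝ → E → ℝ≥0∞ := fun τ y => ENNReal.ofReal (poissonProfile d τ ‖y‖)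
  have hpt (x : E) : P t (x - z) * P s (x - w) ≤
      2 ^ (d + 1) * (P t (z - w) * P s (x - w) + P s (w - z) * P t (x - z)) := by
    have h0 {τ : ℝ} (hτ : 0 < τ) (y : E) := poissonProfile_nonneg (d := d) hτ (norm_nonneg y)
    simp only [P]
    rw [← ENNReal.ofReal_mul (h0 ht _), ← ENNReal.ofReal_mul (h0 ht _),
      ← ENNReal.ofReal_mul (h0 hs _), ← ENNReal.ofReal_add (mul_nonneg (h0 ht _) (h0 hs _))
        (mul_nonneg (h0 hs _) (h0 ht _)),
      ← ENNReal.ofReal_ofNat, ← ENNReal.ofReal_pow zero_le_two,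
      ← ENNReal.ofReal_mul (by positivity)]
    exact ENNReal.ofReal_le_ofReal (poissonProfile_mul_le ht hs x z w)
  calc ∫⁻ x, P t (x - z) * P s (x - w) ∂μ
      ≤ ∫⁻ x, 2 ^ (d + 1) * (P t (z - w) * P s (x - w) + P s (w - z) * P t (x - z)) ∂μ :=
        lintegral_mono hpt
    _ = 2 ^ (d + 1) * (P t (z - w) * poissonConst μ + P s (w - z) * poissonConst μ) := by
        rw [lintegral_const_mul _ (by fun_prop), lintegral_add_left (by fun_prop),
          lintegral_const_mul _ (by fun_prop), lintegral_const_mul _ (by fun_prop),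
          lintegral_poissonProfile μ hs w, lintegral_poissonProfile μ ht z]
    _ = _ := by ring

@[fun_prop]
lemma measurable_poissonSmoothing (t : ℝ) (Q : Set E) : Measurable (poissonSmoothing μ t Q) :=
  Measurable.lintegral_prod_right' (f := fun p : E × E =>
    ENNReal.ofReal (poissonProfile (finrank ℝ E) t ‖p.1 - p.2‖)) (by fun_prop)

lemma lintegral_poissonSmoothing_mul_le (ht : 0 < t) (hs : 0 < s) (A B : Set E) :
    ∫⁻ x, poissonSmoothing μ t A x * poissonSmoothing μ s B x ∂μ ≤
      2 ^ (finrank ℝ E + 1) * poissonConst μ *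
        (∫⁻ z in A, poissonSmoothing μ t B z ∂μ + ∫⁻ w in B, poissonSmoothing μ s A w ∂μ) := by
  set P : ℝ → E → E → ℝ≥0∞ := fun τ x y =>
    ENNReal.ofReal (poissonProfile (finrank ℝ E) τ ‖x - y‖)
  have hP (τ : ℝ) : Measurable (uncurry (P τ)) := by fun_prop
  have hswap : ∫⁻ z in A, ∫⁻ w in B, P s w z ∂μ ∂μ = ∫⁻ w in B, poissonSmoothing μ s A w ∂μ :=
    lintegral_lintegral_swap ((hP s).comp measurable_swap).aemeasurable
  calc ∫⁻ x, poissonSmoothing μ t A x * poissonSmoothing μ s B x ∂μ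
      = ∫⁻ z in A, ∫⁻ w in B, ∫⁻ x, P t x z * P s x w ∂μ ∂μ ∂μ :=
        lintegral_mul_lintegral_eq_lintegral_lintegral_lintegral (hP t) (hP s)
    _ ≤ ∫⁻ z in A, ∫⁻ w in B,
          2 ^ (finrank ℝ E + 1) * poissonConst μ * (P t z w + P s w z) ∂μ ∂μ :=
        lintegral_mono fun z => lintegral_mono fun w => lintegral_poissonProfile_mul_le μ ht hs z w
    _ = 2 ^ (finrank ℝ E + 1) * poissonConst μ *
          (∫⁻ z in A, ∫⁻ w in B, P t z w ∂μ ∂μ + ∫⁻ z in A, ∫⁻ w in B, P s w z ∂μ ∂μ) := by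
        have hc : 2 ^ (finrank ℝ E + 1) * poissonConst μ ≠ ∞ :=
          ENNReal.mul_ne_top (by simp) (poissonConst_lt_top μ).ne
        rw [← lintegral_add_left (hP t).lintegral_prod_right, ← lintegral_const_mul' _ _ hc]
        refine lintegral_congr fun z => ?_
        rw [← lintegral_add_left (hP t).of_uncurry_left, ← lintegral_const_mul' _ _ hc]
    _ = _ := by rw [hswap]; rfl

variable {ι : Type*} [Countable ι] {Q : ι → Set E}

lemma tsum_poissonSmoothing_le (hQ : ∀ i, MeasurableSet (Q i)) (hdisj : Pairwise (Disjoint on Q))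
    (ht : 0 < t) (x : E) : ∑' i, poissonSmoothing μ t (Q i) x ≤ poissonConst μ := by
  simp only [poissonSmoothing]
  rw [← lintegral_iUnion hQ hdisj, ← lintegral_poissonProfile μ ht x]
  simp_rw [norm_sub_rev _ x]
  exact setLIntegral_le_lintegral _ _

lemma tsum_tsum_setLIntegral_poissonSmoothing_le {t : ι → ℝ} (ht : ∀ i, 0 < t i)
    (hQ : ∀ i, MeasurableSet (Q i)) (hdisj : Pairwise (Disjoint on Q)) :
    ∑' i, ∑' j, ∫⁻ z in Q i, poissonSmoothing μ (t i) (Q j) z ∂μ ≤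
      poissonConst μ * ∑' i, μ (Q i) := by
  calc ∑' i, ∑' j, ∫⁻ z in Q i, poissonSmoothing μ (t i) (Q j) z ∂μ
      = ∑' i, ∫⁻ z in Q i, ∑' j, poissonSmoothing μ (t i) (Q j) z ∂μ :=
        tsum_congr fun i => (lintegral_tsum fun j => by fun_prop).symm
    _ ≤ ∑' i, ∫⁻ z in Q i, poissonConst μ ∂μ := by
        gcongr with i z
        exact tsum_poissonSmoothing_le μ hQ hdisj (ht i) z
    _ = poissonConst μ * ∑' i, μ (Q i) := by
        simp_rw [setLIntegral_const, ENNReal.tsum_mul_left]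

lemma lintegral_tsum_poissonSmoothing_sq_le {t : ι → ℝ} (ht : ∀ i, 0 < t i)
    (hQ : ∀ i, MeasurableSet (Q i)) (hdisj : Pairwise (Disjoint on Q)) :
    ∫⁻ x, (∑' i, poissonSmoothing μ (t i) (Q i) x) ^ 2 ∂μ ≤
      2 ^ (finrank ℝ E + 2) * poissonConst μ ^ 2 * ∑' i, μ (Q i) := by
  set c := 2 ^ (finrank ℝ E + 1) * poissonConst μ
  set a : ι → ι → ℝ≥0∞ := fun i j => ∫⁻ z in Q i, poissonSmoothing μ (t i) (Q j) z ∂μ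
  calc ∫⁻ x, (∑' i, poissonSmoothing μ (t i) (Q i) x) ^ 2 ∂μ
      = ∑' i, ∑' j, ∫⁻ x, poissonSmoothing μ (t i) (Q i) x *
          poissonSmoothing μ (t j) (Q j) x ∂μ :=
        lintegral_tsum_sq fun i => by fun_prop
    _ ≤ ∑' i, ∑' j, c * (a i j + a j i) := by
        gcongr with i j
        exact lintegral_poissonSmoothing_mul_le μ (ht i) (ht j) (Q i) (Q j)
    _ = 2 * c * ∑' i, ∑' j, a i j := by
        simp_rw [ENNReal.tsum_mul_left, ENNReal.tsum_add]
        rw [ENNReal.tsum_comm (f := fun j i => a i j)]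
        ring
    _ ≤ 2 * c * (poissonConst μ * ∑' i, μ (Q i)) := by
        gcongr
        exact tsum_tsum_setLIntegral_poissonSmoothing_le μ ht hQ hdisj
    _ = _ := by ring

lemma eLpNorm_tsum_setIntegral_poissonProfile_le {t : ι → ℝ} (ht : ∀ i, 0 < t i)
    (hQ : ∀ i, MeasurableSet (Q i)) (hdisj : Pairwise (Disjoint on Q)) :
    eLpNorm (fun x => ∑' i, ∫ z in Q i, poissonProfile (finrank ℝ E) (t i) ‖x - z‖ ∂μ) 2 μ ≤
      (2 ^ (finrank ℝ E + 2) * poissonConst μ ^ 2) ^ (1 / 2 : ℝ) *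
        (∑' i, μ (Q i)) ^ (1 / 2 : ℝ) := by
  have hdom (x : E) : ‖∑' i, ∫ z in Q i, poissonProfile (finrank ℝ E) (t i) ‖x - z‖ ∂μ‖ₑ ≤
      ‖∑' i, poissonSmoothing μ (t i) (Q i) x‖ₑ :=
    enorm_tsum_le_tsum_enorm.trans <|
      ENNReal.tsum_le_tsum fun i => enorm_setIntegral_poissonProfile_le μ (ht i) (Q i) x
  refine (eLpNorm_mono_enorm hdom).trans ?_
  rw [eLpNorm_eq_lintegral_rpow_enorm_toReal two_ne_zero ENNReal.ofNat_ne_top,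
    ← ENNReal.mul_rpow_of_nonneg _ _ (by norm_num)]
  simp only [enorm_eq_self, ENNReal.toReal_ofNat, one_div, ENNReal.rpow_two]
  gcongr
  exact lintegral_tsum_poissonSmoothing_sq_le μ ht hQ hdisj

end Haar

theorem sum_cube_poisson_L2_estimate_general (m : ℕ) :
    ∃ C > 0, ∀ (ι : Type) [Countable ι],
      ∀ (c : ι → EuclideanSpace ℝ (Fin m)) (t : ι → ℝ)
        (Q : ι → Set (EuclideanSpace ℝ (Fin m))),
        (∀ i, 0 < t i) →
        (∀ i, Q i = {z | ∀ j, z j ∈ Set.Icc (c i j) (c i j + t i)}) →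
        (Pairwise fun i j => Disjoint (Q i) (Q j)) →
        eLpNorm
            (fun x : EuclideanSpace ℝ (Fin m) =>
              ∑' i, ∫ z in Q i, t i / (t i + ‖x - z‖) ^ (m + 1)) 2 volume ≤
          ENNReal.ofReal C * (∑' i, volume (Q i)) ^ (1 / 2 : ℝ) := by
  set K : ℝ≥0∞ := (2 ^ (m + 2) * poissonConst (volume : Measure (EuclideanSpace ℝ (Fin m))) ^ 2)
    ^ (1 / 2 : ℝ)
  have hK : K ≠ ∞ := ENNReal.rpow_ne_top_of_nonneg (by norm_num)
    (ENNReal.mul_ne_top (by simp) (ENNReal.pow_ne_top (poissonConst_lt_top _).ne))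
  refine ⟨K.toReal + 1, by positivity, fun ι _ c t Q ht hQ hdisj => ?_⟩
  have hQm (i : ι) : MeasurableSet (Q i) := by
    rw [hQ i]
    measurability
  have hL2 := eLpNorm_tsum_setIntegral_poissonProfile_le volume ht hQm hdisj
  simp only [finrank_euclideanSpace_fin, poissonProfile] at hL2
  refine hL2.trans (mul_le_mul_left ?_ _)
  exact (ENNReal.ofReal_toReal hK).ge.trans (ENNReal.ofReal_le_ofReal (by linarith))

/-- L² estimate underlying claim (3.2) of Section 3.1: for every integer `m ≥ 1` there is
`C > 0` such that for every countable family of pairwise disjoint axis-parallel cubes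
`Q i ⊂ ℝ^m` with side lengths `t i`, the function
`F x = ∑ᵢ ∫_{Q i} t i / (t i + |x - z|)^{m+1} dz` satisfies
`‖F‖_{L²(ℝ^m)} ≤ C (∑ᵢ |Q i|)^{1/2}`. -/
theorem sum_cube_poisson_L2_estimate (m : ℕ) (hm : 1 ≤ m) :
    ∃ C > 0, ∀ (ι : Type) [Countable ι],
      ∀ (c : ι → EuclideanSpace ℝ (Fin m)) (t : ι → ℝ)
        (Q : ι → Set (EuclideanSpace ℝ (Fin m))),
        (∀ i, 0 < t i) →
        (∀ i, Q i = {z | ∀ j, z j ∈ Set.Icc (c i j) (c i j + t i)}) →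
        (Pairwise fun i j => Disjoint (Q i) (Q j)) →
        eLpNorm
            (fun x : EuclideanSpace ℝ (Fin m) =>
              ∑' i, ∫ z in Q i, t i / (t i + ‖x - z‖) ^ (m + 1)) 2 volume ≤
          ENNReal.ofReal C * (∑' i, volume (Q i)) ^ (1 / 2 : ℝ) :=
  sum_cube_poisson_L2_estimate_general m
end
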